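/- Let S = ⟨qm₁,…,qm_d, p⟩ be an extension of S₁. If p < q, then ord_S(s+p) = ord_S(s)+1 for all s∈S (note m(S) = p in this case), so by García's criterion the tangent cone G(S) is Cohen–Macaulay and consequently the Hilbert function of S is non-decreasing. -/

import Mathlib

open scoped Pointwise

/-- `S ⊆ ℕ` is a numerical semigroup: it contains `0`, is closed under
addition, and has finite complement in `ℕ`. -/
def IsNumSgp (S : Set ℕ) : Prop :=
  (0 : ℕ) ∈ S ∧ (∀ a ∈ S, ∀ b ∈ S, a + b ∈ S) ∧ {x : ℕ | x ∉ S}.Finite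

/-- `nM S t` is the `t`-fold sumset of the maximal ideal `M = S \ {0}`,
with the convention `nM S 0 = S`. -/
def nM (S : Set ℕ) : ℕ → Set ℕ
  | 0 => S
  | t + 1 => (S \ {0}) + nM S t

/-- the order of `s` with respect to `S` : the largest `t` with `s ∈ tM`. -/
noncomputable def ordS (S : Set ℕ) (s : ℕ) : ℕ := sSup {t : ℕ | s ∈ nM S t}

/-- the multiplicity of `S` : its least nonzero element. -/
noncomputable def mult (S : Set ℕ) : ℕ := sInf {x : ℕ | x ∈ S ∧ x ≠ 0}

/-- the Apéry set of `S` with respect to `x` : elements `s ∈ S` with `s - x ∉ S`. -/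
def Ap (S : Set ℕ) (x : ℕ) : Set ℕ := {s : ℕ | s ∈ S ∧ ¬ ∃ t ∈ S, s = t + x}

/-- membership of an integer in (the image in `ℤ` of) `S`. -/
def zmem (S : Set ℕ) (z : ℤ) : Prop := ∃ t ∈ S, (t : ℤ) = z

/-- the Frobenius number of `S` : the largest integer not in `S`. -/
noncomputable def Frob (S : Set ℕ) : ℤ := sSup {z : ℤ | ¬ zmem S z}

/-- `S` is symmetric: for every integer `z`, `z ∈ S` iff `F(S) - z ∉ S`. -/
def IsSymmetric (S : Set ℕ) : Prop := ∀ z : ℤ, zmem S z ↔ ¬ zmem S (Frob S - z)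

/-- the set of maximal elements of `Ap S x` with respect to the order
`u ⪯ v` iff `v = u + z` for some `z ∈ S`. -/
def MaxAp (S : Set ℕ) (x : ℕ) : Set ℕ :=
  {w : ℕ | w ∈ Ap S x ∧ ∀ y ∈ Ap S x, (∃ z ∈ S, y = w + z) → y = w}

/-- the set of maximal elements of `Ap S x` with respect to the order
`u ⪯_M v` iff `v = u + z` for some `z ∈ S` with `ord(v) = ord(u) + ord(z)`. -/
def MaxMAp (S : Set ℕ) (x : ℕ) : Set ℕ :=
  {w : ℕ | w ∈ Ap S x ∧ ∀ y ∈ Ap S x,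
    (∃ z ∈ S, y = w + z ∧ ordS S y = ordS S w + ordS S z) → y = w}

/-- `S` is M-pure with respect to `x` : all maximal elements of `Ap S x`
under `⪯_M` have the same order. -/
def MPureWrt (S : Set ℕ) (x : ℕ) : Prop :=
  ∀ w ∈ MaxMAp S x, ∀ w' ∈ MaxMAp S x, ordS S w = ordS S w'

/-- `S` is M-pure : it is M-pure with respect to its multiplicity. -/
def MPure (S : Set ℕ) : Prop := MPureWrt S (mult S)

/-- `β_i(x)` : the number of elements of `Ap S x` of order `i`. -/
noncomputable def betaS (S : Set ℕ) (x i : ℕ) : ℕ := {w ∈ Ap S x | ordS S w = i}.ncard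

/-- `d(x)` : the maximal order of an element of `Ap S x`. -/
noncomputable def dS (S : Set ℕ) (x : ℕ) : ℕ := sSup (ordS S '' Ap S x)

/-- the reduction number of `S` : the least `r` with `(r+1)M = m(S) + rM`. -/
noncomputable def redNum (S : Set ℕ) : ℕ :=
  sInf {r : ℕ | nM S (r + 1) = (fun y => mult S + y) '' nM S r}

/-- `l_x(S) = max { ord(s+x) - ord(x) - ord(s) : s ∈ S, ord(s) ≤ r }`. -/
noncomputable def lS (S : Set ℕ) (x : ℕ) : ℕ :=
  sSup {t : ℕ | ∃ s ∈ S, ordS S s ≤ redNum S ∧ t = ordS S (s + x) - ordS S x - ordS S s}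

/-- the Hilbert function of `S`. -/
noncomputable def HilbS (S : Set ℕ) (t : ℕ) : ℕ := (nM S t \ nM S (t + 1)).ncard

/-- The data of a gluing `S = ⟨q m₁, …, q m_d, p n₁, …, p n_k⟩` of two numerical
semigroups `S₁ = ⟨m₁, …, m_d⟩` and `S₂ = ⟨n₁, …, n_k⟩`, minimally generated by
`m₁ < ⋯ < m_d` and `n₁ < ⋯ < n_k`, where `p ∈ S₁ \ {m₁, …, m_d}`,
`q ∈ S₂ \ {n₁, …, n_k}` and `gcd(p, q) = 1`. -/
structure Gluing where
  d : ℕ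
  k : ℕ
  hd : 0 < d
  hk : 0 < k
  m : Fin d → ℕ
  n : Fin k → ℕ
  p : ℕ
  q : ℕ
  hm : StrictMono m
  hn : StrictMono n
  hmin₁ : ∀ i, m i ∉ AddSubmonoid.closure (Set.range m \ {m i})
  hmin₂ : ∀ j, n j ∉ AddSubmonoid.closure (Set.range n \ {n j})
  hnum₁ : IsNumSgp (AddSubmonoid.closure (Set.range m) : Set ℕ)
  hnum₂ : IsNumSgp (AddSubmonoid.closure (Set.range n) : Set ℕ)
  hp : p ∈ AddSubmonoid.closure (Set.range m)
  hq : q ∈ AddSubmonoid.closure (Set.range n)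
  hpm : p ∉ Set.range m
  hqn : q ∉ Set.range n
  hpq : Nat.gcd p q = 1

/-- the numerical semigroup `S₁ = ⟨m₁, …, m_d⟩`. -/
def Gluing.S₁ (G : Gluing) : Set ℕ := (AddSubmonoid.closure (Set.range G.m) : Set ℕ)

/-- the numerical semigroup `S₂ = ⟨n₁, …, n_k⟩`. -/
def Gluing.S₂ (G : Gluing) : Set ℕ := (AddSubmonoid.closure (Set.range G.n) : Set ℕ)

/-- the glued numerical semigroup `S = ⟨q m₁, …, q m_d, p n₁, …, p n_k⟩`. -/
def Gluing.S (G : Gluing) : Set ℕ :=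
  (AddSubmonoid.closure
    ((fun x => G.q * x) '' Set.range G.m ∪ (fun x => G.p * x) '' Set.range G.n) : Set ℕ)

/-- the smallest generator `m₁` of `S₁`. -/
def Gluing.m₁ (G : Gluing) : ℕ := G.m ⟨0, G.hd⟩

/-- the smallest generator `n₁` of `S₂`. -/
def Gluing.n₁ (G : Gluing) : ℕ := G.n ⟨0, G.hk⟩

/-- the gluing is specific if `ord_{S₂}(q) + l_q(S₂) ≤ ord_{S₁}(p)`. -/
def Gluing.Specific (G : Gluing) : Prop := ordS G.S₂ G.q + lS G.S₂ G.q ≤ ordS G.S₁ G.p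

/-- the gluing is nice if `q = a n₁` for some `1 < a ≤ ord_{S₁}(p)`. -/
def Gluing.Nice (G : Gluing) : Prop := ∃ a : ℕ, 1 < a ∧ a ≤ ordS G.S₁ G.p ∧ G.q = a * G.n₁

/-! The extension `S = ⟨q m₁, …, q m_d, p⟩` is `{q a + t p : a ∈ S₁, t ∈ ℕ}`, and an element lies in
`nM S n` exactly when it can be written as `q a + t p` with `a ∈ nM S₁ k` and `n ≤ k + t`.
For `s ∈ S`, write `s + p = q a + t p` with `ord_S(s + p) ≤ k + t`. If `t > 0`, dropping one `p`
shows `ord_S(s) ≥ ord_S(s + p) - 1`. If `t = 0`, then `q ∣ s + p`; since `gcd(p, q) = 1`, every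
representation of `s` uses at least `q - 1` copies of `p`, which settles `k < q`. For `k ≥ q > p`,
a pigeonhole argument on the `k` summands of `a` removes `p` from `a` at the cost of at most `p`
summands, and `s = q (a - p) + (q - 1) p` has order at least `k - p + q - 1 ≥ k`.
Hence `ord_S(s + p) = ord_S(s) + 1`, and `· + p` injects the elements of order `t` into those of
order `t + 1`, so the Hilbert function is non-decreasing. -/

lemma mem_nM_succ_iff {T : Set ℕ} {n x : ℕ} :
    x ∈ nM T (n + 1) ↔ ∃ a ∈ T, a ≠ 0 ∧ ∃ b ∈ nM T n, a + b = x := by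
  simp only [nM, Set.mem_add, Set.mem_sdiff, Set.mem_singleton_iff, and_assoc]

@[simp] lemma nM_zero (T : Set ℕ) : nM T 0 = T := rfl

lemma le_of_mem_nM {T : Set ℕ} : ∀ {n x : ℕ}, x ∈ nM T n → n ≤ x
  | 0, _, _ => Nat.zero_le _
  | _ + 1, _, h => by
    obtain ⟨a, -, ha0, b, hb, rfl⟩ := mem_nM_succ_iff.mp h
    have := le_of_mem_nM hb
    omega

lemma bddAbove_setOf_mem_nM (T : Set ℕ) (x : ℕ) : BddAbove {n | x ∈ nM T n} :=
  ⟨x, fun _ => le_of_mem_nM⟩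

lemma le_ordS {T : Set ℕ} {n x : ℕ} (h : x ∈ nM T n) : n ≤ ordS T x :=
  le_csSup (bddAbove_setOf_mem_nM T x) h

lemma mem_nM_ordS {T : Set ℕ} {x : ℕ} (hx : x ∈ T) : x ∈ nM T (ordS T x) :=
  Nat.sSup_mem ⟨0, hx⟩ (bddAbove_setOf_mem_nM T x)

-- pigeonhole on the residues mod `z` of the `z + 1` prefix sums of length `≤ z`
lemma List.exists_append_append_dvd_sum {z : ℕ} (hz : 0 < z) {l : List ℕ} (hl : z ≤ l.length) :
    ∃ l₁ l₂ l₃, l = l₁ ++ l₂ ++ l₃ ∧ l₂ ≠ [] ∧ l₂.length ≤ z ∧ z ∣ l₂.sum := by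
  obtain ⟨i, hi, j, hj, hij, hmod⟩ := Finset.exists_ne_map_eq_of_card_lt_of_maps_to
    (s := Finset.range (z + 1)) (t := Finset.range z) (f := fun i => (l.take i).sum % z)
    (by simp) (fun i _ => by simpa using Nat.mod_lt _ hz)
  wlog hlt : i < j generalizing i j
  · exact this j hj i hi hij.symm hmod.symm (by omega)
  rw [Finset.mem_range] at hi hj
  refine ⟨l.take i, (l.drop i).take (j - i), l.drop j, ?_, ?_, ?_, ?_⟩
  · rw [← List.take_add, Nat.add_sub_cancel' hlt.le, List.take_append_drop]
  · simp only [ne_eq, List.take_eq_nil_iff, List.drop_eq_nil_iff, not_or, not_le]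
    omega
  · simp only [List.length_take, List.length_drop, inf_le_iff, tsub_le_iff_right]
    omega
  · have hsum : (l.take j).sum = (l.take i).sum + ((l.drop i).take (j - i)).sum := by
      rw [← List.sum_append, ← List.take_add, Nat.add_sub_cancel' hlt.le]
    simpa using (Nat.modEq_iff_dvd' (Nat.le_add_right _ _)).mp (hsum ▸ hmod :)

section AddSubmonoid

variable {S : AddSubmonoid ℕ}

lemma mem_nM_iff_exists_list {n x : ℕ} : x ∈ nM S n ↔
    ∃ l : List ℕ, l.length = n ∧ (∀ y ∈ l, y ∈ S ∧ y ≠ 0) ∧ ∃ s ∈ S, x = l.sum + s := by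
  induction n generalizing x with
  | zero =>
    refine ⟨fun hx => ⟨[], rfl, by simp, x, hx, by simp⟩, ?_⟩
    rintro ⟨l, hl, -, s, hs, rfl⟩
    simpa [List.length_eq_zero_iff.mp hl] using hs
  | succ n ih =>
    simp only [mem_nM_succ_iff, ih]
    constructor
    · rintro ⟨a, ha, ha0, _, ⟨l, rfl, hl, s, hs, rfl⟩, rfl⟩
      refine ⟨a :: l, rfl, ?_, s, hs, by simp [add_assoc]⟩
      simp only [List.mem_cons, forall_eq_or_imp]
      exact ⟨⟨ha, ha0⟩, hl⟩
    · rintro ⟨_ | ⟨a, l⟩, hlen, hl, s, hs, rfl⟩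
      · simp at hlen
      · simp only [List.mem_cons, forall_eq_or_imp] at hl
        exact ⟨a, hl.1.1, hl.1.2, _, ⟨l, by simpa using hlen, hl.2, s, hs, rfl⟩,
          by simp [add_assoc]⟩

lemma nM_subset : ∀ n, nM S n ⊆ S
  | 0 => subset_rfl
  | n + 1 => fun _ h => by
    obtain ⟨a, ha, -, b, hb, rfl⟩ := mem_nM_succ_iff.mp h
    exact S.add_mem ha (nM_subset n hb)

lemma add_mem_nM {a x : ℕ} (ha : a ∈ S) : ∀ {n}, x ∈ nM S n → a + x ∈ nM S n
  | 0, h => S.add_mem ha h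
  | _ + 1, h => by
    obtain ⟨b, hb, hb0, y, hy, rfl⟩ := mem_nM_succ_iff.mp h
    exact mem_nM_succ_iff.mpr ⟨b, hb, hb0, a + y, add_mem_nM ha hy, by ring⟩

lemma nM_succ_subset (n : ℕ) : nM S (n + 1) ⊆ nM S n := fun _ h => by
  obtain ⟨a, ha, -, b, hb, rfl⟩ := mem_nM_succ_iff.mp h
  exact add_mem_nM ha hb

lemma nM_antitone : Antitone (nM S) :=
  antitone_nat_of_succ_le nM_succ_subset

lemma mem_nM_iff_le_ordS {n x : ℕ} (hx : x ∈ S) : x ∈ nM S n ↔ n ≤ ordS S x :=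
  ⟨le_ordS, fun h => nM_antitone h (mem_nM_ordS hx)⟩

lemma mem_nM_diff_nM_succ_iff {n x : ℕ} :
    x ∈ nM S n \ nM S (n + 1) ↔ x ∈ S ∧ ordS S x = n := by
  constructor
  · rintro ⟨hn, hn1⟩
    have hx := nM_subset n hn
    rw [mem_nM_iff_le_ordS hx] at hn hn1
    exact ⟨hx, by omega⟩
  · rintro ⟨hx, rfl⟩
    simp [mem_nM_iff_le_ordS hx]

lemma add_nsmul_mem_nM {z x n : ℕ} (hz : z ∈ S) (hz0 : z ≠ 0) (hx : x ∈ nM S n) :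
    ∀ t, x + t * z ∈ nM S (n + t)
  | 0 => by simpa using hx
  | t + 1 => mem_nM_succ_iff.mpr
      ⟨z, hz, hz0, _, add_nsmul_mem_nM hz hz0 hx t, by ring⟩

lemma exists_forall_ge_mem_nM (hcof : {x | x ∉ S}.Finite) {z : ℕ} (hz : z ∈ S) (hz0 : z ≠ 0)
    (n : ℕ) : ∃ N, ∀ x, N ≤ x → x ∈ nM S n := by
  obtain ⟨C, hC⟩ := hcof.bddAbove
  refine ⟨C + 1 + n * z, fun x hx => ?_⟩
  have hmem : x - n * z ∈ S := by
    by_contra h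
    have := hC h
    omega
  simpa [show x - n * z + n * z = x by omega] using add_nsmul_mem_nM hz hz0 (n := 0) hmem n

lemma finite_diff_nM (hcof : {x | x ∉ S}.Finite) {z : ℕ} (hz : z ∈ S) (hz0 : z ≠ 0) (n : ℕ) :
    ((S : Set ℕ) \ nM S n).Finite := by
  obtain ⟨N, hN⟩ := exists_forall_ge_mem_nM hcof hz hz0 n
  exact (Set.finite_Iio N).subset fun x hx => not_le.mp fun h => hx.2 (hN x h)

lemma hilbS_le_hilbS_succ {p : ℕ} (hp : p ∈ S) (hord : ∀ s ∈ S, ordS S (s + p) = ordS S s + 1)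
    {t : ℕ} (hfin : ((S : Set ℕ) \ nM S (t + 2)).Finite) : HilbS S t ≤ HilbS S (t + 1) := by
  refine Set.ncard_le_ncard_of_injOn (· + p) (fun x hx => ?_) (add_left_injective p).injOn
    (hfin.subset fun x hx => ⟨nM_subset _ hx.1, hx.2⟩)
  obtain ⟨hxS, rfl⟩ := mem_nM_diff_nM_succ_iff.mp hx
  exact mem_nM_diff_nM_succ_iff.mpr ⟨S.add_mem hxS hp, hord x hxS⟩

lemma sub_mem_nM_sub {z K x : ℕ} (hz : z ∈ S) (hz0 : z ≠ 0) (hx : x ∈ nM S K) (hzK : z ≤ K) :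
    x - z ∈ nM S (K - z) := by
  obtain ⟨l, rfl, hl, s, hs, rfl⟩ := mem_nM_iff_exists_list.mp hx
  obtain ⟨l₁, l₂, l₃, rfl, hne, hlen, c, hc⟩ :=
    List.exists_append_append_dvd_sum (Nat.pos_of_ne_zero hz0) hzK
  obtain ⟨c, rfl⟩ : ∃ c', c = c' + 1 := by
    refine Nat.exists_eq_add_one.mpr (Nat.pos_of_ne_zero ?_)
    rintro rfl
    refine (List.sum_pos _ (fun y hy => Nat.pos_of_ne_zero (hl y ?_).2) hne).ne' (by simpa using hc)
    simp [hy]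
  -- the block `l₂` sums to `(c + 1) z`: replacing it by `c z`, absorbed into the remainder, loses
  -- at most `z` summands
  have hmem : (l₁ ++ l₃).sum + (z * c + s) ∈ nM S (l₁ ++ l₃).length :=
    mem_nM_iff_exists_list.mpr ⟨l₁ ++ l₃, rfl, fun y hy => hl y (by simp only [List.mem_append] at hy ⊢; tauto),
      _, S.add_mem (by simpa [mul_comm] using S.nsmul_mem hz c) hs, rfl⟩
  have hsum : (l₁ ++ l₂ ++ l₃).sum + s - z = (l₁ ++ l₃).sum + (z * c + s) := by
    simp only [List.sum_append, hc, mul_add_one]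
    omega
  refine hsum ▸ nM_antitone ?_ hmem
  simp only [List.append_assoc, List.length_append, tsub_le_iff_right]
  omega

end AddSubmonoid

def extension (S₁ : AddSubmonoid ℕ) (p q : ℕ) : AddSubmonoid ℕ :=
  S₁.map (AddMonoidHom.mulLeft q) ⊔ AddSubmonoid.closure {p}

namespace extension

variable {S₁ : AddSubmonoid ℕ} {p q : ℕ}

lemma closure_eq {d : ℕ} (m : Fin d → ℕ) :
    AddSubmonoid.closure ((fun x => q * x) '' Set.range m ∪ {p}) =
      extension (AddSubmonoid.closure (Set.range m)) p q := by
  rw [AddSubmonoid.closure_union, extension, AddMonoidHom.map_mclosure]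
  rfl

lemma mem_iff {x : ℕ} : x ∈ extension S₁ p q ↔ ∃ a ∈ S₁, ∃ t, q * a + t * p = x := by
  simp [extension, AddSubmonoid.mem_sup, AddSubmonoid.mem_closure_singleton]

lemma mul_add_mul_mem {a : ℕ} (ha : a ∈ S₁) (t : ℕ) : q * a + t * p ∈ extension S₁ p q :=
  mem_iff.mpr ⟨a, ha, t, rfl⟩

lemma p_mem : p ∈ extension S₁ p q := by
  simpa using mul_add_mul_mem (q := q) S₁.zero_mem 1

lemma mul_mem_nM (hq : q ≠ 0) {a : ℕ} : ∀ {k}, a ∈ nM S₁ k → q * a ∈ nM (extension S₁ p q) k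
  | 0, ha => by simpa using mul_add_mul_mem ha 0
  | _ + 1, ha => by
    obtain ⟨b, hb, hb0, c, hc, rfl⟩ := mem_nM_succ_iff.mp ha
    exact mem_nM_succ_iff.mpr ⟨q * b, by simpa using mul_add_mul_mem hb 0,
      mul_ne_zero hq hb0, q * c, mul_mem_nM hq hc, by ring⟩

lemma mul_add_mul_mem_nM (hp : p ≠ 0) (hq : q ≠ 0) {a k : ℕ} (ha : a ∈ nM S₁ k) (t : ℕ) :
    q * a + t * p ∈ nM (extension S₁ p q) (k + t) :=
  add_nsmul_mem_nM p_mem hp (mul_mem_nM hq ha) t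

lemma exists_of_mem_nM {x : ℕ} : ∀ {n}, x ∈ nM (extension S₁ p q) n →
    ∃ a t k, a ∈ nM S₁ k ∧ n ≤ k + t ∧ q * a + t * p = x
  | 0, hx => by
    obtain ⟨a, ha, t, rfl⟩ := mem_iff.mp hx
    exact ⟨a, t, 0, ha, Nat.zero_le _, rfl⟩
  | n + 1, hx => by
    obtain ⟨y, hy, hy0, b, hb, rfl⟩ := mem_nM_succ_iff.mp hx
    obtain ⟨a, t, k, ha, hn, rfl⟩ := exists_of_mem_nM hb
    obtain ⟨a', ha', t', rfl⟩ := mem_iff.mp hy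
    rcases Nat.eq_zero_or_pos t' with rfl | ht'
    · have ha'0 : a' ≠ 0 := by rintro rfl; simp at hy0
      exact ⟨a' + a, t, k + 1, mem_nM_succ_iff.mpr ⟨a', ha', ha'0, a, ha, rfl⟩, by omega,
        by ring⟩
    · exact ⟨a' + a, t' + t, k, add_mem_nM ha' ha, by omega, by ring⟩

lemma mult_eq (hp : p ≠ 0) (hpq : p < q) : mult (extension S₁ p q) = p := by
  refine IsLeast.csInf_eq ⟨⟨p_mem, hp⟩, ?_⟩
  rintro _ ⟨hx, hx0⟩
  obtain ⟨a, -, t, rfl⟩ := mem_iff.mp hx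
  rcases Nat.eq_zero_or_pos t with rfl | ht
  · have : q ≤ q * a :=
      Nat.le_mul_of_pos_right q (Nat.pos_of_ne_zero (right_ne_zero_of_mul (by simpa using hx0)))
    omega
  · have := Nat.le_mul_of_pos_left p ht
    omega

lemma finite_diff_nM (hp : p ≠ 0) (hq : q ≠ 0) {n : ℕ} (hfin : ((S₁ : Set ℕ) \ nM S₁ n).Finite) :
    ((extension S₁ p q : Set ℕ) \ nM (extension S₁ p q) n).Finite := by
  refine (hfin.image2 (fun a t => q * a + t * p) (Set.finite_Iio n)).subset ?_
  rintro x ⟨hx, hxn⟩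
  obtain ⟨a, ha, t, rfl⟩ := mem_iff.mp hx
  have hlt : ordS S₁ a + t < n := not_le.mp fun h =>
    hxn (nM_antitone h (mul_add_mul_mem_nM hp hq (mem_nM_ordS ha) t))
  exact ⟨a, ⟨ha, fun h => by have := le_ordS h; omega⟩, t, Set.mem_Iio.mpr (by omega), rfl⟩

lemma mem_nM_of_dvd_add (hpq : Nat.Coprime p q) (hp : p ≠ 0) (hq : q ≠ 0) {s : ℕ}
    (hs : s ∈ extension S₁ p q) (hdvd : q ∣ s + p) : s ∈ nM (extension S₁ p q) (q - 1) := by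
  obtain ⟨b, hb, t, rfl⟩ := mem_iff.mp hs
  have : q ∣ (t + 1) * p := by
    rw [add_assoc, ← add_one_mul] at hdvd
    exact (Nat.dvd_add_right (dvd_mul_right q b)).mp hdvd
  have := Nat.le_of_dvd t.succ_pos (hpq.symm.dvd_of_dvd_mul_right this)
  exact nM_antitone (by omega) (mul_add_mul_mem_nM (k := 0) hp hq hb t)

lemma mem_nM_of_add_mem_nM_succ (hp : p ∈ S₁) (hp0 : p ≠ 0) (hpq : p < q)
    (hcop : Nat.Coprime p q) {s n : ℕ} (hs : s ∈ extension S₁ p q)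
    (h : s + p ∈ nM (extension S₁ p q) (n + 1)) : s ∈ nM (extension S₁ p q) n := by
  have hq : q ≠ 0 := by omega
  obtain ⟨a, t, k, ha, hn, heq⟩ := exists_of_mem_nM h
  rcases t with _ | t
  · by_cases hk : q ≤ k
    · obtain ⟨c, rfl⟩ : ∃ c, a = c + p := ⟨a - p, by have := le_of_mem_nM ha; omega⟩
      have hc : c ∈ nM S₁ (k - p) := by simpa using sub_mem_nM_sub hp hp0 ha (by omega)
      obtain ⟨q', rfl⟩ := Nat.exists_eq_add_one_of_ne_zero hq
      have hs : s = (q' + 1) * c + q' * p := by linarith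
      exact hs ▸ nM_antitone (by omega) (mul_add_mul_mem_nM hp0 hq hc q')
    · exact nM_antitone (by omega) (mem_nM_of_dvd_add hcop hp0 hq hs ⟨a, by simpa using heq.symm⟩)
  · have hs : s = q * a + t * p := by linarith
    exact hs ▸ nM_antitone (by omega) (mul_add_mul_mem_nM hp0 hq ha t)

lemma ordS_add (hp : p ∈ S₁) (hp0 : p ≠ 0) (hpq : p < q) (hcop : Nat.Coprime p q) {s : ℕ}
    (hs : s ∈ extension S₁ p q) :
    ordS (extension S₁ p q) (s + p) = ordS (extension S₁ p q) s + 1 := by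
  have hge : ordS (extension S₁ p q) s + 1 ≤ ordS (extension S₁ p q) (s + p) := by
    refine le_ordS ?_
    rw [add_comm s p]
    exact mem_nM_succ_iff.mpr ⟨p, p_mem, hp0, s, mem_nM_ordS hs, rfl⟩
  obtain ⟨n, hn⟩ : ∃ n, ordS (extension S₁ p q) (s + p) = n + 1 :=
    ⟨ordS (extension S₁ p q) (s + p) - 1, by omega⟩
  have hsp := mem_nM_ordS ((extension S₁ p q).add_mem hs p_mem)
  rw [hn] at hsp ⊢
  have := le_ordS (mem_nM_of_add_mem_nM_succ hp hp0 hpq hcop hs hsp)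
  omega

end extension

theorem stmt19_general (d : ℕ) (m : Fin d → ℕ)
    (hnum : IsNumSgp (AddSubmonoid.closure (Set.range m) : Set ℕ))
    (p q : ℕ) (hq : 1 < q) (hp : p ∈ AddSubmonoid.closure (Set.range m))
    (hpq : Nat.gcd p q = 1)
    (S : Set ℕ)
    (hS : S = (AddSubmonoid.closure ((fun x => q * x) '' Set.range m ∪ {p}) : Set ℕ))
    (hlt : p < q) :
    mult S = p ∧ (∀ s ∈ S, ordS S (s + p) = ordS S s + 1) ∧
      ∀ t : ℕ, HilbS S t ≤ HilbS S (t + 1) := by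
  have hp0 : p ≠ 0 := by
    rintro rfl
    rw [Nat.gcd_zero_left] at hpq
    omega
  have hord : ∀ s ∈ extension (AddSubmonoid.closure (Set.range m)) p q, _ :=
    fun s hs => extension.ordS_add hp hp0 hlt hpq hs
  subst hS
  rw [extension.closure_eq]
  refine ⟨extension.mult_eq hp0 hlt, hord, fun t => hilbS_le_hilbS_succ extension.p_mem hord ?_⟩
  exact extension.finite_diff_nM hp0 (by omega) (finite_diff_nM hnum.2.2 hp hp0 _)

/-- let `S = ⟨qm₁, …, qm_d, p⟩` be an extension of the numerical
semigroup `S₁ = ⟨m₁, …, m_d⟩` (so `q > 1`, `p ∈ S₁ \ {m₁, …, m_d}`, `gcd(p,q)=1`).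
If `p < q` then `m(S) = p` and `ord_S(s+p) = ord_S(s)+1` for all `s ∈ S` (so by
García's criterion `G(S)` is Cohen–Macaulay), and consequently the Hilbert
function of `S` is non-decreasing. -/
theorem stmt19 (d : ℕ) (hd : 0 < d) (m : Fin d → ℕ) (hm : StrictMono m)
    (hmin : ∀ i, m i ∉ AddSubmonoid.closure (Set.range m \ {m i}))
    (hnum : IsNumSgp (AddSubmonoid.closure (Set.range m) : Set ℕ))
    (p q : ℕ) (hq : 1 < q) (hp : p ∈ AddSubmonoid.closure (Set.range m))
    (hpm : p ∉ Set.range m) (hpq : Nat.gcd p q = 1)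
    (S : Set ℕ)
    (hS : S = (AddSubmonoid.closure ((fun x => q * x) '' Set.range m ∪ {p}) : Set ℕ))
    (hlt : p < q) :
    mult S = p ∧ (∀ s ∈ S, ordS S (s + p) = ordS S s + 1) ∧
      ∀ t : ℕ, HilbS S t ≤ HilbS S (t + 1) :=
  stmt19_general d m hnum p q hq hp hpq S hS hlt
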